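/- arXiv:2603.15113 — 2 statements merged into one kernel-verified Lean document; each statement's English description precedes it below -/
import Mathlib

section
/- Let F be a field of characteristic different from 2, E/F a finite separable field extension, τ an F-algebra automorphism of E with τ ∘ τ = id, and x a nonzero element of E with τ(x) = −x. Then the F-bilinear form B_x on E defined by B_x(v, w) = Tr_{E/F}(v · τ(w) · x) is alternating (B_x(v, v) = 0 for all v ∈ E), nondegenerate (if B_x(v, w) = 0 for all w then v = 0, and if B_x(v, w) = 0 for all v then w = 0), and satisfies the adjunction B_x(a·v, w) = B_x(v, τ(a)·w) for all a, v, w ∈ E. In particular B_x is a symplectic F-bilinear form on the F-vector space E. -/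
/-!
Since `Tr_{E/F}` is invariant under `τ` and `τ (v * τ v * x) = -(v * τ v * x)`, the trace
`B_x(v, v)` equals its own negative, hence vanishes as `2 ≠ 0` in `F`. Nondegeneracy on either
side reduces, since `τ` is bijective, to nondegeneracy of the trace form of the separable
extension `E/F`, applied to `v * x` resp. `τ w * x`, which are nonzero because `x ≠ 0`.
-/

section

variable {F E : Type*} [CommRing F] [CommRing E] [Algebra F E]

theorem Algebra.trace_eq_zero_of_algEquiv_apply_eq_neg [NoZeroDivisors F] (h2 : (2 : F) ≠ 0)
    (τ : E ≃ₐ[F] E) {y : E} (hy : τ y = -y) : Algebra.trace F E y = 0 := by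
  have hneg : Algebra.trace F E y = -Algebra.trace F E y := by
    rw [← map_neg, ← hy, Algebra.trace_eq_of_algEquiv]
  have htwo : (2 : F) * Algebra.trace F E y = 0 := by linear_combination hneg
  exact (mul_eq_zero.mp htwo).resolve_left h2

theorem Algebra.trace_mul_algEquiv_apply_self_mul_eq_zero [NoZeroDivisors F] (h2 : (2 : F) ≠ 0)
    (τ : E ≃ₐ[F] E) (hτ : ∀ y : E, τ (τ y) = y) {x : E} (hx : τ x = -x) (v : E) :
    Algebra.trace F E (v * τ v * x) = 0 := by
  refine Algebra.trace_eq_zero_of_algEquiv_apply_eq_neg h2 τ ?_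
  rw [map_mul τ, map_mul τ, hτ, hx]
  ring

end

theorem Algebra.eq_zero_of_forall_trace_mul_eq_zero {F E : Type*} [Field F] [Field E]
    [Algebra F E] [FiniteDimensional F E] [Algebra.IsSeparable F E] {y : E}
    (h : ∀ z : E, Algebra.trace F E (y * z) = 0) : y = 0 :=
  (traceForm_nondegenerate F E).1 y h

/-- For a finite separable extension `E/F` with `char F ≠ 2`, an involutive `F`-algebra
automorphism `τ` of `E`, and `x ≠ 0` with `τ x = -x`, the bilinear form
`B_x (v, w) = Tr_{E/F} (v * τ w * x)` is alternating, nondegenerate (on both sides),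
and satisfies the adjunction `B_x (a * v, w) = B_x (v, τ a * w)`. -/
theorem stmt1 {F E : Type*} [Field F] [Field E] [Algebra F E]
    [FiniteDimensional F E] [Algebra.IsSeparable F E]
    (h2 : (2 : F) ≠ 0)
    (τ : E ≃ₐ[F] E) (hτ : ∀ y : E, τ (τ y) = y)
    (x : E) (hx0 : x ≠ 0) (hx : τ x = -x) :
    (∀ v : E, Algebra.trace F E (v * τ v * x) = 0) ∧
    (∀ v : E, (∀ w : E, Algebra.trace F E (v * τ w * x) = 0) → v = 0) ∧
    (∀ w : E, (∀ v : E, Algebra.trace F E (v * τ w * x) = 0) → w = 0) ∧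
    (∀ a v w : E,
      Algebra.trace F E ((a * v) * τ w * x) = Algebra.trace F E (v * τ (τ a * w) * x)) := by
  refine ⟨Algebra.trace_mul_algEquiv_apply_self_mul_eq_zero h2 τ hτ hx, ?_, ?_, ?_⟩
  · intro v hv
    have hvx : v * x = 0 := Algebra.eq_zero_of_forall_trace_mul_eq_zero fun z => by
      simpa [mul_right_comm] using hv (τ.symm z)
    exact (mul_eq_zero.mp hvx).resolve_right hx0
  · intro w hw
    have hτwx : τ w * x = 0 := Algebra.eq_zero_of_forall_trace_mul_eq_zero fun z => by
      simpa [mul_comm, mul_left_comm] using hw z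
    exact τ.injective <| by simpa using (mul_eq_zero.mp hτwx).resolve_right hx0
  · intro a v w
    rw [map_mul τ, hτ, mul_left_comm v, ← mul_assoc]
end

section
/- (Existence of an order-two point of a twisted elliptic maximal torus of GL_n, in the bilinear-form model.) Let F be a field of characteristic different from 2, E/F a finite separable field extension, and τ an F-algebra automorphism of E of order exactly 2 (τ ∘ τ = id and τ ≠ id). Then there exists a nonzero x ∈ E with τ(x) = −x, and consequently there exists a nondegenerate alternating F-bilinear form B on the F-vector space E satisfying B(a·v, w) = B(v, τ(a)·w) for all a, v, w ∈ E; namely one may take B = B_x with B_x(v, w) = Tr_{E/F}(v · τ(w) · x). -/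
/-!
An anti-invariant element `x = y - τ y` is nonzero as soon as `τ y ≠ y`. Since the trace is
`τ`-invariant, it kills every anti-invariant element when `2 ≠ 0`; as `v * τ v * x` is
anti-invariant, `B_x` is alternating. Nondegeneracy of `B_x` reduces to that of the trace form of
the separable extension `E/F`, because multiplication by `x ≠ 0` and `τ` are bijective.
-/

namespace AlgEquiv

variable {R A : Type*} [CommSemiring R] [Ring A] [Algebra R A]

lemma exists_ne_zero_apply_eq_neg (τ : A ≃ₐ[R] A) (hτ : ∀ y, τ (τ y) = y)
    (hτne : τ ≠ AlgEquiv.refl) : ∃ x : A, x ≠ 0 ∧ τ x = -x := by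
  obtain ⟨y, hy⟩ : ∃ y, τ y ≠ y := by
    by_contra! h
    exact hτne (AlgEquiv.ext h)
  exact ⟨y - τ y, sub_ne_zero.2 hy.symm, by rw [map_sub, hτ, neg_sub]⟩

end AlgEquiv

namespace Algebra

variable {F E : Type*} [Field F]

lemma trace_eq_zero_of_apply_eq_neg [CommRing E] [Algebra F E] (h2 : (2 : F) ≠ 0)
    (τ : E ≃ₐ[F] E) {z : E} (hz : τ z = -z) : trace F E z = 0 := by
  have hinv := trace_eq_of_algEquiv τ z
  rw [hz, map_neg] at hinv
  exact (mul_eq_zero.1 (by linear_combination -hinv : (2 : F) * trace F E z = 0)).resolve_left h2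

variable [Field E] [Algebra F E] [FiniteDimensional F E] [Algebra.IsSeparable F E]

lemma eq_zero_of_forall_trace_mul_eq_zero_s3 {z : E} (h : ∀ u, trace F E (z * u) = 0) : z = 0 :=
  (traceForm_nondegenerate F E).1 z (by simpa only [traceForm_apply] using h)

variable {x : E} (hx : x ≠ 0) (τ : E ≃ₐ[F] E)
include hx

lemma eq_zero_of_forall_trace_mul_apply_mul_eq_zero_left (hτ : ∀ y, τ (τ y) = y) {v : E}
    (hv : ∀ w, trace F E (v * τ w * x) = 0) : v = 0 := by
  have hvx : v * x = 0 := eq_zero_of_forall_trace_mul_eq_zero_s3 fun u ↦ by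
    simpa only [hτ, mul_right_comm] using hv (τ u)
  exact (mul_eq_zero.1 hvx).resolve_right hx

lemma eq_zero_of_forall_trace_mul_apply_mul_eq_zero_right {w : E}
    (hw : ∀ v, trace F E (v * τ w * x) = 0) : w = 0 := by
  have hwx : τ w * x = 0 := eq_zero_of_forall_trace_mul_eq_zero_s3 fun u ↦ by
    simpa only [mul_comm u, mul_assoc] using hw u
  exact (map_eq_zero_iff τ τ.injective).1 ((mul_eq_zero.1 hwx).resolve_right hx)

end Algebra

/-- For a finite separable extension `E/F` with `char F ≠ 2` and an `F`-algebra
automorphism `τ` of `E` of order exactly `2`, there exists `x ≠ 0` with `τ x = -x`,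
and hence the form `B_x (v, w) = Tr_{E/F} (v * τ w * x)` is a nondegenerate alternating
`F`-bilinear form on `E` satisfying `B_x (a * v, w) = B_x (v, τ a * w)`. -/
theorem stmt3 {F E : Type*} [Field F] [Field E] [Algebra F E]
    [FiniteDimensional F E] [Algebra.IsSeparable F E]
    (h2 : (2 : F) ≠ 0)
    (τ : E ≃ₐ[F] E) (hτ : ∀ y : E, τ (τ y) = y) (hτne : τ ≠ (AlgEquiv.refl : E ≃ₐ[F] E)) :
    ∃ x : E, x ≠ 0 ∧ τ x = -x ∧
      (∀ v : E, Algebra.trace F E (v * τ v * x) = 0) ∧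
      (∀ v : E, (∀ w : E, Algebra.trace F E (v * τ w * x) = 0) → v = 0) ∧
      (∀ w : E, (∀ v : E, Algebra.trace F E (v * τ w * x) = 0) → w = 0) ∧
      (∀ a v w : E,
        Algebra.trace F E ((a * v) * τ w * x) = Algebra.trace F E (v * τ (τ a * w) * x)) := by
  obtain ⟨x, hx0, hx⟩ := τ.exists_ne_zero_apply_eq_neg hτ hτne
  refine ⟨x, hx0, hx, fun v ↦ ?_,
    fun _ ↦ Algebra.eq_zero_of_forall_trace_mul_apply_mul_eq_zero_left hx0 τ hτ,
    fun _ ↦ Algebra.eq_zero_of_forall_trace_mul_apply_mul_eq_zero_right hx0 τ, fun a v w ↦ ?_⟩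
  · exact Algebra.trace_eq_zero_of_apply_eq_neg h2 τ (by rw [map_mul, map_mul, hτ, hx]; ring)
  · rw [map_mul τ, hτ, mul_left_comm v, mul_assoc a]
end
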